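/- arXiv:1211.3380 — 3 statements merged into one kernel-verified Lean document; each statement's English description precedes it below -/
import Mathlib

section
/- Let v = (α, e^u) ∈ ℝ² × ℝ² with ‖e^u‖ = 1 and ‖α − λ^N p‖ ≤ λ^{2N}, where p = P_x(e^u) ≠ 0 and v_x denotes the first coordinate of v. Then λ^N(‖p‖ − 3λ^N) ≤ |v_x|/‖v‖ ≤ λ^N(‖p‖ + 3λ^N), provided N is large enough (e.g. λ^N(‖p‖+1) ≤ 1/2). -/
/-!
With `t = λ^N`, the first coordinate of `α` is within `t²` of `t‖p‖` (as `p` lies on the first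
axis), while `‖v‖² = 1 + ‖α‖²` with `‖α‖ ≤ 2t`, so `1 ≤ ‖v‖ ≤ 1 + 2t²`. Dividing, the error
`t²` in the numerator and the relative error `2t²` in the denominator together cost at most
`3t²`, using `t‖p‖ ≤ 1`.
-/

namespace EuclideanSpace

variable {ι : Type*} [Fintype ι]

lemma abs_abs_apply_sub_abs_apply_le (x y : EuclideanSpace ℝ ι) (i : ι) :
    |(|x i| - |y i|)| ≤ ‖x - y‖ :=
  (abs_abs_sub_abs_le_abs_sub _ _).trans (PiLp.norm_apply_le (x - y) i)

lemma norm_eq_abs_apply_zero_of_apply_one_eq_zero (x : EuclideanSpace ℝ (Fin 2))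
    (hx : x 1 = 0) : ‖x‖ = |x 0| := by
  simp [EuclideanSpace.norm_eq, Fin.sum_univ_two, hx, Real.sqrt_sq_eq_abs]

end EuclideanSpace

namespace WithLp

variable {E F : Type*} [SeminormedAddCommGroup E] [SeminormedAddCommGroup F]

lemma one_le_prod_norm_of_L2_of_norm_snd_eq_one (x : E) {y : F} (hy : ‖y‖ = 1) :
    1 ≤ ‖(WithLp.equiv 2 (E × F)).symm (x, y)‖ := by
  have hsq : ‖(WithLp.equiv 2 (E × F)).symm (x, y)‖ ^ 2 = ‖x‖ ^ 2 + 1 := by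
    simp [prod_norm_sq_eq_of_L2, hy]
  nlinarith [norm_nonneg ((WithLp.equiv 2 (E × F)).symm (x, y)), sq_nonneg ‖x‖]

lemma prod_norm_of_L2_le_of_norm_snd_eq_one (x : E) {y : F} (hy : ‖y‖ = 1) :
    ‖(WithLp.equiv 2 (E × F)).symm (x, y)‖ ≤ 1 + ‖x‖ ^ 2 / 2 := by
  have hsq : ‖(WithLp.equiv 2 (E × F)).symm (x, y)‖ ^ 2 = ‖x‖ ^ 2 + 1 := by
    simp [prod_norm_sq_eq_of_L2, hy]
  rw [← pow_le_pow_iff_left₀ (norm_nonneg _) (by positivity) two_ne_zero, hsq]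
  nlinarith [sq_nonneg (‖x‖ ^ 2)]

end WithLp

lemma div_le_mul_add_of_abs_sub_le {t a x n : ℝ} (hx0 : 0 ≤ x) (hx : |x - t * a| ≤ t ^ 2)
    (hn : 1 ≤ n) : x / n ≤ t * (a + 3 * t) :=
  calc x / n ≤ x := div_le_self hx0 hn
    _ ≤ t * (a + 3 * t) := by nlinarith [le_abs_self (x - t * a), sq_nonneg t]

lemma mul_sub_le_div_of_abs_sub_le {t a x n : ℝ} (ht : 0 ≤ t) (hx0 : 0 ≤ x) (hta : t * a ≤ 1)
    (hx : |x - t * a| ≤ t ^ 2) (hn : 1 ≤ n) (hn' : n ≤ 1 + 2 * t ^ 2) :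
    t * (a - 3 * t) ≤ x / n := by
  rcases le_or_gt (t * (a - 3 * t)) 0 with hneg | hpos
  · exact hneg.trans (div_nonneg hx0 (zero_le_one.trans hn))
  rw [le_div_iff₀ (by linarith)]
  calc t * (a - 3 * t) * n ≤ t * (a - 3 * t) * (1 + 2 * t ^ 2) := by gcongr
    _ ≤ t * a - t ^ 2 := by nlinarith [pow_nonneg ht 3, pow_nonneg ht 4]
    _ ≤ x := by linarith [neg_abs_le (x - t * a)]

theorem stmt7_general (N : ℕ) (lam : ℝ) (hlam : 0 < lam)
    (eu α p : EuclideanSpace ℝ (Fin 2)) (heu : ‖eu‖ = 1)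
    (hp : p 0 = eu 0 ∧ p 1 = 0)
    (hα : ‖α - lam ^ N • p‖ ≤ lam ^ (2 * N))
    (hNbig : lam ^ N * (‖p‖ + 1) ≤ 1 / 2) :
    lam ^ N * (‖p‖ - 3 * lam ^ N) ≤
        |α 0| / ‖(WithLp.equiv 2
          (EuclideanSpace ℝ (Fin 2) × EuclideanSpace ℝ (Fin 2))).symm (α, eu)‖ ∧
      |α 0| / ‖(WithLp.equiv 2
          (EuclideanSpace ℝ (Fin 2) × EuclideanSpace ℝ (Fin 2))).symm (α, eu)‖ ≤
        lam ^ N * (‖p‖ + 3 * lam ^ N) := by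
  rw [mul_comm, pow_mul] at hα
  set t := lam ^ N
  have ht : 0 ≤ t := pow_nonneg hlam.le N
  have hp_norm : ‖p‖ = |p 0| := EuclideanSpace.norm_eq_abs_apply_zero_of_apply_one_eq_zero p hp.2
  have hp_le : ‖p‖ ≤ 1 := hp_norm ▸ hp.1 ▸ heu ▸ PiLp.norm_apply_le eu 0
  have htp : |(t • p) 0| = t * ‖p‖ := by
    rw [PiLp.smul_apply, smul_eq_mul, abs_mul, abs_of_nonneg ht, hp_norm]
  have hα0 : |(|α 0|) - t * ‖p‖| ≤ t ^ 2 :=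
    htp ▸ (EuclideanSpace.abs_abs_apply_sub_abs_apply_le α (t • p) 0).trans hα
  have ht_half : t ≤ 1 / 2 := by nlinarith [norm_nonneg p]
  have hα_norm : ‖α‖ ≤ 2 * t :=
    calc ‖α‖ ≤ ‖t • p‖ + ‖α - t • p‖ := norm_le_norm_add_norm_sub' α (t • p)
      _ ≤ 2 * t := by rw [norm_smul, Real.norm_of_nonneg ht]; nlinarith
  have hv_ge := WithLp.one_le_prod_norm_of_L2_of_norm_snd_eq_one α heu
  have hv_le : ‖(WithLp.equiv 2 (EuclideanSpace ℝ (Fin 2) × EuclideanSpace ℝ (Fin 2))).symm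
      (α, eu)‖ ≤ 1 + 2 * t ^ 2 := by
    nlinarith [WithLp.prod_norm_of_L2_le_of_norm_snd_eq_one α heu, norm_nonneg α]
  exact ⟨mul_sub_le_div_of_abs_sub_le ht (abs_nonneg _) (by nlinarith) hα0 hv_ge hv_le,
    div_le_mul_add_of_abs_sub_le (abs_nonneg _) hα0 hv_ge⟩

/-- Let `v = (α, e^u) ∈ ℝ² × ℝ²` (with the Euclidean norm on `ℝ⁴`), `‖e^u‖ = 1`,
`p = P_x(e^u) ≠ 0`, and `‖α − λ^N p‖ ≤ λ^{2N}`.  If `N` is large enough that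
`λ^N(‖p‖+1) ≤ 1/2`, then `λ^N(‖p‖ − 3λ^N) ≤ |v_x|/‖v‖ ≤ λ^N(‖p‖ + 3λ^N)`,
where `v_x = α 0` is the first coordinate of `v`. -/
theorem stmt7 (N : ℕ) (lam : ℝ) (hlam : 0 < lam) (hlam1 : lam < 1)
    (eu α p : EuclideanSpace ℝ (Fin 2)) (heu : ‖eu‖ = 1)
    (hp : p 0 = eu 0 ∧ p 1 = 0) (hpne : p ≠ 0)
    (hα : ‖α - lam ^ N • p‖ ≤ lam ^ (2 * N))
    (hNbig : lam ^ N * (‖p‖ + 1) ≤ 1 / 2) :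
    lam ^ N * (‖p‖ - 3 * lam ^ N) ≤
        |α 0| / ‖(WithLp.equiv 2
          (EuclideanSpace ℝ (Fin 2) × EuclideanSpace ℝ (Fin 2))).symm (α, eu)‖ ∧
      |α 0| / ‖(WithLp.equiv 2
          (EuclideanSpace ℝ (Fin 2) × EuclideanSpace ℝ (Fin 2))).symm (α, eu)‖ ≤
        lam ^ N * (‖p‖ + 3 * lam ^ N) :=
  stmt7_general N lam hlam eu α p heu hp hα hNbig
end

section
/- Let Ω = 2 + N cos x, M the matrix with rows (Ω, −1), (1, 0), and let X be a unit vector in ℝ² with angle θ from the vector s = (1, Ω). Then ‖M X‖ ≥ |sin θ|·√(1 + Ω²) ≥ |sin θ|·|2 + N cos x| ≥ N|sin θ||cos x| − 2. -/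
/-!
`M` kills the `s`-direction in its first coordinate: `M (1, Ω) = (0, 1)` while
`M (Ω, -1) = (1 + Ω², Ω)`. Hence the first coordinate of `M X` is `sin θ · √(1 + Ω²)`, which bounds
`‖M X‖`; the remaining two inequalities are `|Ω| ≤ √(1 + Ω²)` and the triangle inequality.
-/

open Real

theorem abs_le_sqrt_one_add_sq (a : ℝ) : |a| ≤ √(1 + a ^ 2) :=
  abs_le_sqrt (by linarith)

theorem mul_abs_mul_abs_sub_le_abs_mul_abs_add {t a : ℝ} (ht : |t| ≤ 1) (ha : 0 ≤ a) (N c : ℝ) :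
    N * |t| * |c| - a ≤ |t| * |a + N * c| := by
  have hNc : N * |c| ≤ |a + N * c| + a := by
    calc N * |c| ≤ |N * c| := by rw [abs_mul]; gcongr; exact le_abs_self N
      _ ≤ |a + N * c| + a := by
        have h := abs_sub_abs_le_abs_sub (N * c) (-a)
        rw [abs_neg, abs_of_nonneg ha, sub_neg_eq_add, add_comm] at h
        linarith
  nlinarith [abs_nonneg t, abs_nonneg (a + N * c)]

theorem stmt13_general (N x θ : ℝ)
    (Ω : ℝ) (hΩ : Ω = 2 + N * Real.cos x)
    (X : EuclideanSpace ℝ (Fin 2))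
    (hX : X = (Real.cos θ / Real.sqrt (1 + Ω ^ 2)) •
              (WithLp.toLp 2 ![1, Ω] : EuclideanSpace ℝ (Fin 2)) +
          (Real.sin θ / Real.sqrt (1 + Ω ^ 2)) •
              (WithLp.toLp 2 ![Ω, -1] : EuclideanSpace ℝ (Fin 2)))
    (MX : EuclideanSpace ℝ (Fin 2)) (hMX : MX = ![Ω * X 0 - X 1, X 0]) :
    |Real.sin θ| * Real.sqrt (1 + Ω ^ 2) ≤ ‖MX‖ ∧
    |Real.sin θ| * |2 + N * Real.cos x| ≤ |Real.sin θ| * Real.sqrt (1 + Ω ^ 2) ∧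
    N * |Real.sin θ| * |Real.cos x| - 2 ≤ |Real.sin θ| * |2 + N * Real.cos x| := by
  have hMX₀ : MX 0 = sin θ * √(1 + Ω ^ 2) := by
    have hr : √(1 + Ω ^ 2) ^ 2 = 1 + Ω ^ 2 := sq_sqrt (by positivity)
    have hr₀ : √(1 + Ω ^ 2) ≠ 0 := by positivity
    simp only [hMX, hX, PiLp.add_apply, PiLp.smul_apply, Matrix.cons_val_zero, Matrix.cons_val_one,
      Matrix.cons_val_fin_one, smul_eq_mul, mul_one, mul_neg]
    field_simp
    linear_combination -sin θ * hr
  refine ⟨?_, ?_, mul_abs_mul_abs_sub_le_abs_mul_abs_add (abs_sin_le_one θ) zero_le_two N _⟩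
  · calc |sin θ| * √(1 + Ω ^ 2) = ‖MX 0‖ := by
          rw [hMX₀, norm_mul, norm_of_nonneg (sqrt_nonneg _), norm_eq_abs]
      _ ≤ ‖MX‖ := PiLp.norm_apply_le MX 0
  · rw [← hΩ]
    exact mul_le_mul_of_nonneg_left (abs_le_sqrt_one_add_sq Ω) (abs_nonneg _)

/-- Let `Ω = 2 + N cos x`, `M` the matrix with rows `(Ω, −1)`, `(1, 0)`, and `X`
the unit vector at angle `θ` from `s = (1, Ω)`, i.e.
`X = (cos θ/√(1+Ω²))·(1,Ω) + (sin θ/√(1+Ω²))·(Ω,−1)`.  Then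
`‖M X‖ ≥ |sin θ|·√(1+Ω²) ≥ |sin θ|·|2 + N cos x| ≥ N|sin θ||cos x| − 2`. -/
theorem stmt13 (N x θ : ℝ) (hN : 0 < N)
    (Ω : ℝ) (hΩ : Ω = 2 + N * Real.cos x)
    (X : EuclideanSpace ℝ (Fin 2))
    (hX : X = (Real.cos θ / Real.sqrt (1 + Ω ^ 2)) •
              (WithLp.toLp 2 ![1, Ω] : EuclideanSpace ℝ (Fin 2)) +
          (Real.sin θ / Real.sqrt (1 + Ω ^ 2)) •
              (WithLp.toLp 2 ![Ω, -1] : EuclideanSpace ℝ (Fin 2)))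
    (MX : EuclideanSpace ℝ (Fin 2)) (hMX : MX = ![Ω * X 0 - X 1, X 0]) :
    |Real.sin θ| * Real.sqrt (1 + Ω ^ 2) ≤ ‖MX‖ ∧
    |Real.sin θ| * |2 + N * Real.cos x| ≤ |Real.sin θ| * Real.sqrt (1 + Ω ^ 2) ∧
    N * |Real.sin θ| * |Real.cos x| - 2 ≤ |Real.sin θ| * |2 + N * Real.cos x| :=
  stmt13_general N x θ Ω hΩ X hX MX hMX
end

section
/- If x ∉ Crit (i.e. |cos x| > 1/√N) then |Ω(x)| = |2 + N cos x| > √N − 2, and for any unit vector X with angle θ from s(x) = (1, Ω(x)), ‖M(x)X‖ ≥ √N|sin θ| − 2. -/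
/-! Off the critical set, `N |cos x| > √N`, so `|Ω| ≥ N |cos x| - 2 > √N - 2`. Since
`|Ω| ≤ √(1 + Ω²)` and `|sin θ| ≤ 1`, the given bound then yields
`‖M X‖ ≥ (√N - 2) |sin θ| ≥ √N |sin θ| - 2`. -/

namespace Real

lemma sqrt_lt_mul_of_inv_sqrt_lt {N c : ℝ} (hN : 0 < N) (h : 1 / √N < c) : √N < N * c := by
  have hs : 0 < √N := sqrt_pos.mpr hN
  have h1 : 1 < √N * c := by rwa [div_lt_iff₀ hs, mul_comm] at h
  calc √N = √N * 1 := (mul_one _).symm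
    _ < √N * (√N * c) := mul_lt_mul_of_pos_left h1 hs
    _ = N * c := by rw [← mul_assoc, mul_self_sqrt hN.le]

lemma sqrt_sub_two_lt_abs_two_add_mul {N c : ℝ} (hN : 0 < N) (h : 1 / √N < |c|) :
    √N - 2 < |2 + N * c| := by
  have hNc : √N < |N * c| := by
    rw [abs_mul, abs_of_pos hN]
    exact sqrt_lt_mul_of_inv_sqrt_lt hN h
  have htri : |N * c| ≤ |2 + N * c| + 2 := by
    simpa [add_comm] using abs_sub_le (N * c) (-2) 0
  linarith

end Real

lemma mul_sub_two_le_mul_of_sub_two_le {r w s : ℝ} (hs₀ : 0 ≤ s) (hs₁ : s ≤ 1)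
    (h : r - 2 ≤ w) : r * s - 2 ≤ s * w := by
  nlinarith

/-- If `x ∉ Crit` (i.e. `|cos x| > 1/√N`, with `N > 4`) then
`|Ω(x)| = |2 + N cos x| > √N − 2`, and for any unit vector `X` at angle `θ` from
`s(x) = (1, Ω(x))`, given the lower bound `‖M(x)X‖ ≥ |sin θ|√(1+Ω(x)²)`, one has
`‖M(x)X‖ ≥ √N|sin θ| − 2`. -/
theorem stmt16 (N x θ : ℝ) (hN : 4 < N)
    (hx : 1 / Real.sqrt N < |Real.cos x|)
    (Ω : ℝ) (hΩ : Ω = 2 + N * Real.cos x)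
    (nMX : ℝ) (hlow : |Real.sin θ| * Real.sqrt (1 + Ω ^ 2) ≤ nMX) :
    Real.sqrt N - 2 < |Ω| ∧ Real.sqrt N * |Real.sin θ| - 2 ≤ nMX := by
  have hΩlt : Real.sqrt N - 2 < |Ω| :=
    hΩ ▸ Real.sqrt_sub_two_lt_abs_two_add_mul (by linarith) hx
  have hΩle : |Ω| ≤ Real.sqrt (1 + Ω ^ 2) := Real.abs_le_sqrt (by linarith)
  refine ⟨hΩlt, ?_⟩
  calc Real.sqrt N * |Real.sin θ| - 2 ≤ |Real.sin θ| * Real.sqrt (1 + Ω ^ 2) :=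
        mul_sub_two_le_mul_of_sub_two_le (abs_nonneg _) (Real.abs_sin_le_one θ)
          (hΩlt.le.trans hΩle)
    _ ≤ nMX := hlow
end
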